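/- Let M ⊆ [ω]^ω be open and dense in the Ellentuck topology and not Ramsey null, and let F be a partition of M into Ramsey null sets such that every subfamily has completely Ramsey union. Then for every Ellentuck basic set [a,A] there exists [b,B] ⊆ [a,A] such that the family {F ∩ [b,B] : F ∈ F} of nonempty traces has cardinality continuum. -/

import Mathlib

open Set

/-- The Ellentuck basic set `[a, A]` of infinite sets `B` with `a ⊆ B ⊆ a ∪ A`. -/
def EllSet (a : Finset ℕ) (A : Set ℕ) : Set (Set ℕ) :=
  {B | B.Infinite ∧ ↑a ⊆ B ∧ B ⊆ ↑a ∪ A}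

/-- `M` is completely Ramsey. -/
def CRSet (M : Set (Set ℕ)) : Prop :=
  ∀ (a : Finset ℕ) (A : Set ℕ), A.Infinite →
    ∃ B ⊆ A, B.Infinite ∧ (EllSet a B ⊆ M ∨ EllSet a B ∩ M = ∅)

/-- `M` is Ramsey null. -/
def RamseyNull (M : Set (Set ℕ)) : Prop :=
  ∀ (a : Finset ℕ) (A : Set ℕ), A.Infinite →
    ∃ B ⊆ A, B.Infinite ∧ EllSet a B ∩ M = ∅

/-- `M` is open in the Ellentuck topology. -/
def EllOpen (M : Set (Set ℕ)) : Prop :=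
  M ⊆ {A | A.Infinite} ∧
    ∀ B ∈ M, ∃ (a : Finset ℕ) (A : Set ℕ), A.Infinite ∧ B ∈ EllSet a A ∧ EllSet a A ⊆ M

/-- `M` is dense in the Ellentuck topology. -/
def EllDense (M : Set (Set ℕ)) : Prop :=
  ∀ (a : Finset ℕ) (A : Set ℕ), A.Infinite → (EllSet a A).Nonempty →
    (EllSet a A ∩ M).Nonempty


/-!
Code each piece `F ∈ 𝓕` by a chosen point `ε F ∈ F` and let `Uₙ` be the union of the pieces whose
code contains `n`; each `Uₙ` is completely Ramsey. By fusion, a basic set `[c, C] ⊆ M` contains some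
`[c, C']` each of whose points lies in a refinement deciding `Uₙ`, for every `n`. If no two
refinements of `[c, C]` met disjoint sets of pieces, these decisions could not disagree, so all
points of `[c, C']` would have the same code and `[c, C']` would lie in a single Ramsey null piece.
Splitting repeatedly gives a binary tree of refinements with growing stems; the union of the stems
along a branch is a point of the top basic set, and different branches end up in different pieces.
-/

lemma EllSet.union_mem {d : Finset ℕ} {D : Set ℕ} (hD : D.Infinite) : ↑d ∪ D ∈ EllSet d D :=
  ⟨hD.mono subset_union_right, subset_union_left, subset_rfl⟩

lemma EllSet.mono {d : Finset ℕ} {D E : Set ℕ} (h : E ⊆ D) : EllSet d E ⊆ EllSet d D :=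
  fun _ ⟨hx, hdx, hxE⟩ => ⟨hx, hdx, hxE.trans (union_subset_union_right _ h)⟩

lemma RamseyNull.not_ellSet_subset {F : Set (Set ℕ)} (hF : RamseyNull F) {d : Finset ℕ}
    {D : Set ℕ} (hD : D.Infinite) : ¬ EllSet d D ⊆ F := by
  intro hDF
  obtain ⟨E, hED, hE, hEF⟩ := hF d D hD
  have hx := EllSet.union_mem (d := d) hE
  exact eq_empty_iff_forall_notMem.1 hEF _ ⟨hx, hDF (EllSet.mono hED hx)⟩

lemma EllDense.exists_ellSet_subset {M : Set (Set ℕ)} (hdense : EllDense M) (hM : CRSet M)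
    {a : Finset ℕ} {A : Set ℕ} (hA : A.Infinite) : ∃ B ⊆ A, B.Infinite ∧ EllSet a B ⊆ M := by
  obtain ⟨B, hBA, hB, hBM | hBM⟩ := hM a A hA
  · exact ⟨B, hBA, hB, hBM⟩
  · exact absurd hBM (hdense a B hB ⟨_, EllSet.union_mem hB⟩).ne_empty

namespace Ellentuck

/-- `q ≤ p` for Ellentuck conditions `(stem, reservoir)`. -/
def Refines (q p : Finset ℕ × Set ℕ) : Prop :=
  p.1 ⊆ q.1 ∧ (q.1 : Set ℕ) ⊆ ↑p.1 ∪ p.2 ∧ q.2 ⊆ p.2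

namespace Refines

variable {q p r : Finset ℕ × Set ℕ}

lemma refl (p : Finset ℕ × Set ℕ) : Refines p p :=
  ⟨subset_rfl, subset_union_left, subset_rfl⟩

lemma union_subset_union (h : Refines q p) : ↑q.1 ∪ q.2 ⊆ ↑p.1 ∪ p.2 :=
  union_subset h.2.1 (h.2.2.trans subset_union_right)

lemma trans (hqp : Refines q p) (hpr : Refines p r) : Refines q r :=
  ⟨hpr.1.trans hqp.1, hqp.2.1.trans hpr.union_subset_union, hqp.2.2.trans hpr.2.2⟩

lemma ellSet_subset (h : Refines q p) : EllSet q.1 q.2 ⊆ EllSet p.1 p.2 :=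
  fun _ ⟨hx, hqx, hxq⟩ =>
    ⟨hx, (Finset.coe_subset.2 h.1).trans hqx, hxq.trans h.union_subset_union⟩

end Refines

lemma exists_refines_stem_ssubset {q : Finset ℕ × Set ℕ} (hq : q.2.Infinite) :
    ∃ q', Refines q' q ∧ q'.2.Infinite ∧ q.1 ⊂ q'.1 := by
  obtain ⟨k, hkq, hk⟩ := (hq.sdiff q.1.finite_toSet).nonempty
  refine ⟨(insert k q.1, q.2 \ {k}), ⟨Finset.subset_insert _ _, ?_, sdiff_subset⟩,
    hq.sdiff (finite_singleton k), Finset.ssubset_insert hk⟩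
  rw [Finset.coe_insert]
  exact insert_subset (Or.inr hkq) subset_union_left

def Decides (U : Set (Set ℕ)) (d : Finset ℕ) (E : Set ℕ) : Prop :=
  EllSet d E ⊆ U ∨ EllSet d E ∩ U = ∅

section Decides

variable {U : Set (Set ℕ)} {d : Finset ℕ} {D E : Set ℕ}

lemma Decides.mono (h : Decides U d D) (hED : E ⊆ D) : Decides U d E :=
  h.imp (EllSet.mono hED).trans
    fun h => subset_empty_iff.1 ((inter_subset_inter_left U (EllSet.mono hED)).trans h.subset)

lemma Decides.mem_iff (h : Decides U d E) {x y : Set ℕ} (hx : x ∈ EllSet d E)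
    (hy : y ∈ EllSet d E) : x ∈ U ↔ y ∈ U := by
  rcases h with hE | hE
  · exact iff_of_true (hE hx) (hE hy)
  · exact iff_of_false (fun h => hE.subset ⟨hx, h⟩) (fun h => hE.subset ⟨hy, h⟩)

lemma exists_forall_decides_finset {ι : Type*} (U : ι → Set (Set ℕ)) (d : ι → Finset ℕ)
    (hU : ∀ i, CRSet (U i)) (s : Finset ι) (hD : D.Infinite) :
    ∃ E ⊆ D, E.Infinite ∧ ∀ i ∈ s, Decides (U i) (d i) E := by
  classical
  induction s using Finset.induction_on generalizing D with
  | empty => exact ⟨D, subset_rfl, hD, by simp⟩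
  | insert i s _ ih =>
    obtain ⟨E₁, hE₁D, hE₁, hi⟩ := hU i (d i) D hD
    obtain ⟨E, hEE₁, hE, hs⟩ := ih hE₁
    exact ⟨E, hEE₁.trans hE₁D, hE, Finset.forall_mem_insert _ _ _ |>.2 ⟨Decides.mono hi hEE₁, hs⟩⟩

end Decides

section Fusion

variable {U : ℕ → Set (Set ℕ)}

lemma exists_fusion_step (hU : ∀ n, CRSet (U n)) (c : Finset ℕ) (m N : ℕ) {D : Set ℕ}
    (hD : D.Infinite) : ∃ E ⊆ D, E.Infinite ∧ (∀ j ∈ E, N < j) ∧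
      ∀ d ⊆ Finset.range (N + 1), ∀ n ≤ m, Decides (U n) (c ∪ d) E := by
  obtain ⟨E, hED, hE, hdec⟩ := exists_forall_decides_finset (fun i : Finset ℕ × ℕ => U i.2)
    (fun i => c ∪ i.1) (fun i => hU i.2)
    ((Finset.range (N + 1)).powerset ×ˢ Finset.range (m + 1)) (hD.sdiff (finite_Iic N))
  refine ⟨E, hED.trans sdiff_subset, hE, fun j hj => not_le.1 (hED hj).2,
    fun d hd n hn => hdec (d, n) ?_⟩
  simp [hd, Nat.lt_succ_iff.2 hn]

open Classical in
lemma mem_ellSet_of_fusion {D : ℕ → Set ℕ} {k : ℕ → ℕ} (hD : Antitone D) (hk : StrictMono k)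
    (hkD : ∀ m, k m ∈ D m) {c : Finset ℕ} {x : Set ℕ} (hx : x ∈ EllSet c (range k)) (n : ℕ) :
    x ∈ EllSet (c ∪ (Finset.range (k n + 1)).filter (· ∈ x)) (D (n + 1)) := by
  obtain ⟨hx, hcx, hxk⟩ := hx
  refine ⟨hx, ?_, fun j hj => ?_⟩
  · rw [Finset.coe_union]
    exact union_subset hcx fun j hj => (Finset.mem_filter.1 hj).2
  rcases hxk hj with hjc | ⟨i, rfl⟩
  · exact Or.inl (by simp [hjc])
  rcases le_or_gt i n with hin | hni
  · exact Or.inl (by simp [hj, hk.monotone hin])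
  · exact Or.inr (hD hni (hkD i))

lemma exists_fusion (hU : ∀ n, CRSet (U n)) (c : Finset ℕ) {C : Set ℕ} (hC : C.Infinite) :
    ∃ C' ⊆ C, C'.Infinite ∧ ∀ x ∈ EllSet c C', ∀ n, ∃ q, Refines q (c, C) ∧ q.2.Infinite ∧
      x ∈ EllSet q.1 q.2 ∧ Decides (U n) q.1 q.2 := by
  classical
  choose! next hnext hinf hgt hdec using
    fun m (D : Set ℕ) (hD : D.Infinite) => exists_fusion_step hU c m (sInf D) hD
  let D : ℕ → Set ℕ := fun m => Nat.rec C (fun m Dm => next m Dm) m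
  have hDinf : ∀ m, (D m).Infinite := fun m => Nat.rec hC (fun m ih => hinf m _ ih) m
  let k : ℕ → ℕ := fun m => sInf (D m)
  have hkD : ∀ m, k m ∈ D m := fun m => Nat.sInf_mem (hDinf m).nonempty
  have hD : Antitone D := antitone_nat_of_succ_le fun m => hnext m _ (hDinf m)
  have hk : StrictMono k := strictMono_nat_of_lt_succ fun m => hgt m _ (hDinf m) _ (hkD (m + 1))
  have hDC : ∀ m, D m ⊆ C := fun m => hD (Nat.zero_le m)
  refine ⟨range k, range_subset_iff.2 fun m => hDC m (hkD m),
    infinite_range_of_injective hk.injective, fun x hx n => ?_⟩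
  refine ⟨(c ∪ (Finset.range (k n + 1)).filter (· ∈ x), D (n + 1)),
    ⟨Finset.subset_union_left, ?_, hDC (n + 1)⟩, hDinf (n + 1),
    mem_ellSet_of_fusion hD hk hkD hx n, hdec n _ (hDinf n) _ (Finset.filter_subset _ _) n le_rfl⟩
  rw [Finset.coe_union]
  refine union_subset subset_union_left fun j hj => ?_
  rcases hx.2.2 (Finset.mem_filter.1 hj).2 with hjc | ⟨i, rfl⟩
  · exact Or.inl hjc
  · exact Or.inr (hDC i (hkD i))

theorem exists_forall_decides_of_forall_inter_nonempty (hU : ∀ n, CRSet (U n)) {c : Finset ℕ}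
    {C : Set ℕ} (hC : C.Infinite)
    (hmeet : ∀ n q₀ q₁, Refines q₀ (c, C) → Refines q₁ (c, C) → q₀.2.Infinite → q₁.2.Infinite →
      EllSet q₀.1 q₀.2 ⊆ U n → (EllSet q₁.1 q₁.2 ∩ U n).Nonempty) :
    ∃ C' ⊆ C, C'.Infinite ∧ ∀ n, Decides (U n) c C' := by
  obtain ⟨C', hC'C, hC', hfus⟩ := exists_fusion hU c hC
  refine ⟨C', hC'C, hC', fun n => or_iff_not_imp_right.2 fun hne y hy => ?_⟩
  obtain ⟨x, hx, hxU⟩ := nonempty_iff_ne_empty.2 hne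
  obtain ⟨qx, hqx, hqxi, hxq, hdx⟩ := hfus x hx n
  obtain ⟨qy, hqy, hqyi, hyq, hdy⟩ := hfus y hy n
  rcases hdy with hyU | hyU
  · exact hyU hyq
  rcases hdx with hxU' | hxU'
  · exact absurd hyU (hmeet n qx qy hqx hqy hqxi hqyi hxU').ne_empty
  · exact absurd hxU' (nonempty_iff_ne_empty.1 ⟨x, hxq, hxU⟩)

end Fusion

section Partition

variable {α : Type*} {𝓕 : Set (Set α)} {x y : α}

noncomputable def piece (𝓕 : Set (Set α)) (x : α) : Set α :=
  Classical.epsilon fun F => F ∈ 𝓕 ∧ x ∈ F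

lemma piece_spec (hx : x ∈ ⋃₀ 𝓕) : piece 𝓕 x ∈ 𝓕 ∧ x ∈ piece 𝓕 x :=
  Classical.epsilon_spec (mem_sUnion.1 hx)

lemma piece_eq (h𝓕 : 𝓕.PairwiseDisjoint id) {F : Set α} (hF : F ∈ 𝓕) (hx : x ∈ F) :
    piece 𝓕 x = F :=
  have h := piece_spec (mem_sUnion_of_mem hx hF)
  h𝓕.elim_set h.1 hF x h.2 hx

open Cardinal in
lemma mk_traces_eq (h𝓕 : 𝓕.PairwiseDisjoint id) {E : Set α} (hE : E ⊆ ⋃₀ 𝓕) :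
    #{S : Set α | (∃ F ∈ 𝓕, S = F ∩ E) ∧ S.Nonempty} = #(piece 𝓕 '' E) := by
  have htraces : {S : Set α | (∃ F ∈ 𝓕, S = F ∩ E) ∧ S.Nonempty} = (· ∩ E) '' (piece 𝓕 '' E) := by
    ext S
    constructor
    · rintro ⟨⟨F, hF, rfl⟩, x, hxF, hxE⟩
      exact ⟨F, ⟨x, hxE, piece_eq h𝓕 hF hxF⟩, rfl⟩
    · rintro ⟨_, ⟨x, hxE, rfl⟩, rfl⟩
      exact ⟨⟨_, (piece_spec (hE hxE)).1, rfl⟩, x, (piece_spec (hE hxE)).2, hxE⟩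
  rw [htraces]
  refine mk_image_eq_of_injOn _ _ ?_
  rintro _ ⟨x, hxE, rfl⟩ _ ⟨y, hyE, rfl⟩ hxy
  have hx : x ∈ piece 𝓕 x ∩ E := ⟨(piece_spec (hE hxE)).2, hxE⟩
  rw [show piece 𝓕 x ∩ E = piece 𝓕 y ∩ E from hxy] at hx
  exact piece_eq h𝓕 (piece_spec (hE hyE)).1 hx.1

end Partition

section Code

variable {𝓕 : Set (Set (Set ℕ))} {x y : Set ℕ}

noncomputable def codeSet (𝓕 : Set (Set (Set ℕ))) (n : ℕ) : Set (Set ℕ) :=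
  ⋃₀ {F ∈ 𝓕 | n ∈ Classical.epsilon (· ∈ F)}

lemma mem_codeSet_iff (h𝓕 : 𝓕.PairwiseDisjoint id) (hx : x ∈ ⋃₀ 𝓕) (n : ℕ) :
    x ∈ codeSet 𝓕 n ↔ n ∈ Classical.epsilon (· ∈ piece 𝓕 x) := by
  constructor
  · rintro ⟨F, ⟨hF, hn⟩, hxF⟩
    rwa [piece_eq h𝓕 hF hxF]
  · exact fun hn => ⟨_, ⟨(piece_spec hx).1, hn⟩, (piece_spec hx).2⟩

lemma piece_eq_of_forall_mem_codeSet_iff (h𝓕 : 𝓕.PairwiseDisjoint id) (hx : x ∈ ⋃₀ 𝓕)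
    (hy : y ∈ ⋃₀ 𝓕) (h : ∀ n, x ∈ codeSet 𝓕 n ↔ y ∈ codeSet 𝓕 n) : piece 𝓕 x = piece 𝓕 y := by
  have hcode : Classical.epsilon (· ∈ piece 𝓕 x) = Classical.epsilon (· ∈ piece 𝓕 y) :=
    ext fun n => by rw [← mem_codeSet_iff h𝓕 hx, ← mem_codeSet_iff h𝓕 hy, h]
  have hmemx : Classical.epsilon (· ∈ piece 𝓕 x) ∈ piece 𝓕 x :=
    Classical.epsilon_spec ⟨x, (piece_spec hx).2⟩
  have hmemy : Classical.epsilon (· ∈ piece 𝓕 x) ∈ piece 𝓕 y :=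
    hcode ▸ Classical.epsilon_spec ⟨y, (piece_spec hy).2⟩
  exact h𝓕.elim_set (piece_spec hx).1 (piece_spec hy).1 _ hmemx hmemy

theorem exists_refines_disjoint_pieces (h𝓕 : 𝓕.PairwiseDisjoint id)
    (hnull : ∀ F ∈ 𝓕, RamseyNull F) (hadd : ∀ 𝓕' ⊆ 𝓕, CRSet (⋃₀ 𝓕')) {c : Finset ℕ}
    {C : Set ℕ} (hC : C.Infinite) (hC𝓕 : EllSet c C ⊆ ⋃₀ 𝓕) :
    ∃ q₀ q₁, Refines q₀ (c, C) ∧ Refines q₁ (c, C) ∧ q₀.2.Infinite ∧ q₁.2.Infinite ∧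
      Disjoint (piece 𝓕 '' EllSet q₀.1 q₀.2) (piece 𝓕 '' EllSet q₁.1 q₁.2) := by
  by_contra! hmeet
  obtain ⟨C', hC'C, hC', hdec⟩ := exists_forall_decides_of_forall_inter_nonempty
    (U := codeSet 𝓕) (fun n => hadd _ (sep_subset _ _)) hC fun n q₀ q₁ h₀ h₁ hq₀ hq₁ hq₀U => by
      obtain ⟨_, ⟨x, hx, rfl⟩, y, hy, hxy⟩ := not_disjoint_iff.1 (hmeet q₀ q₁ h₀ h₁ hq₀ hq₁)
      refine ⟨y, hy, ?_⟩
      rw [mem_codeSet_iff h𝓕 (hC𝓕 (h₁.ellSet_subset hy)), hxy,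
        ← mem_codeSet_iff h𝓕 (hC𝓕 (h₀.ellSet_subset hx))]
      exact hq₀U hx
  have hC'𝓕 : EllSet c C' ⊆ ⋃₀ 𝓕 := (EllSet.mono hC'C).trans hC𝓕
  have hz := EllSet.union_mem (d := c) hC'
  refine (hnull _ (piece_spec (hC'𝓕 hz)).1).not_ellSet_subset (d := c) hC' fun x hx => ?_
  rw [← piece_eq_of_forall_mem_codeSet_iff h𝓕 (hC'𝓕 hx) (hC'𝓕 hz) fun n => (hdec n).mem_iff hx hz]
  exact (piece_spec (hC'𝓕 hx)).2

end Code

section Tree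

def branch (ch : Finset ℕ × Set ℕ → Bool → Finset ℕ × Set ℕ) (p : Finset ℕ × Set ℕ)
    (σ : ℕ → Bool) : ℕ → Finset ℕ × Set ℕ
  | 0 => p
  | n + 1 => ch (branch ch p σ n) (σ n)

lemma branch_congr {ch : Finset ℕ × Set ℕ → Bool → Finset ℕ × Set ℕ} {p : Finset ℕ × Set ℕ}
    {σ τ : ℕ → Bool} {n : ℕ} (h : ∀ m < n, σ m = τ m) : branch ch p σ n = branch ch p τ n := by
  induction n with
  | zero => rfl
  | succ n ih =>
    simp only [branch, h n n.lt_succ_self, ih fun m hm => h m (hm.trans n.lt_succ_self)]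

lemma iUnion_stem_mem_ellSet (q : ℕ → Finset ℕ × Set ℕ) (hq : ∀ n, Refines (q (n + 1)) (q n))
    (hgrow : ∀ n, (q n).1 ⊂ (q (n + 1)).1) (n : ℕ) :
    (⋃ m, ((q m).1 : Set ℕ)) ∈ EllSet (q n).1 (q n).2 := by
  have hmono : StrictMono fun m => (q m).1 := strictMono_nat_of_lt_succ hgrow
  have hrefines : ∀ m, n ≤ m → Refines (q m) (q n) :=
    fun m => Nat.le_induction (Refines.refl _) (fun m _ ih => (hq m).trans ih) m
  refine ⟨fun hfin => ?_, subset_iUnion (fun m => ((q m).1 : Set ℕ)) n, iUnion_subset fun m => ?_⟩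
  · exact infinite_range_of_injective (Finset.coe_injective.comp hmono.injective)
      (hfin.finite_subsets.subset (range_subset_iff.2 fun m => subset_iUnion _ m))
  rcases le_total m n with hmn | hnm
  · exact (Finset.coe_subset.2 (hmono.monotone hmn)).trans subset_union_left
  · exact (hrefines m hnm).2.1

lemma exists_children_of_split {β : Type*} (π : Set ℕ → β) {q : Finset ℕ × Set ℕ}
    (hsplit : ∃ q₀ q₁, Refines q₀ q ∧ Refines q₁ q ∧ q₀.2.Infinite ∧ q₁.2.Infinite ∧
      Disjoint (π '' EllSet q₀.1 q₀.2) (π '' EllSet q₁.1 q₁.2)) :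
    ∃ ch : Bool → Finset ℕ × Set ℕ,
      (∀ b, Refines (ch b) q ∧ (ch b).2.Infinite ∧ q.1 ⊂ (ch b).1) ∧
        ∀ b, Disjoint (π '' EllSet (ch b).1 (ch b).2) (π '' EllSet (ch !b).1 (ch !b).2) := by
  obtain ⟨q₀, q₁, h₀, h₁, hq₀, hq₁, hdisj⟩ := hsplit
  obtain ⟨r₀, hr₀, hr₀i, hs₀⟩ := exists_refines_stem_ssubset hq₀
  obtain ⟨r₁, hr₁, hr₁i, hs₁⟩ := exists_refines_stem_ssubset hq₁
  have hr : Disjoint (π '' EllSet r₀.1 r₀.2) (π '' EllSet r₁.1 r₁.2) :=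
    hdisj.mono (image_mono hr₀.ellSet_subset) (image_mono hr₁.ellSet_subset)
  refine ⟨fun b => bif b then r₁ else r₀, fun b => ?_, fun b => ?_⟩ <;> cases b
  · exact ⟨hr₀.trans h₀, hr₀i, h₀.1.trans_ssubset hs₀⟩
  · exact ⟨hr₁.trans h₁, hr₁i, h₁.1.trans_ssubset hs₁⟩
  · exact hr
  · exact hr.symm

theorem exists_injective_of_forall_split {β : Type*} (π : Set ℕ → β) (p : Finset ℕ × Set ℕ)
    (hp : p.2.Infinite)
    (hsplit : ∀ q, Refines q p → q.2.Infinite → ∃ q₀ q₁, Refines q₀ q ∧ Refines q₁ q ∧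
      q₀.2.Infinite ∧ q₁.2.Infinite ∧ Disjoint (π '' EllSet q₀.1 q₀.2) (π '' EllSet q₁.1 q₁.2)) :
    ∃ B ⊆ p.2, B.Infinite ∧ ∃ x : (ℕ → Bool) → Set ℕ,
      (∀ σ, x σ ∈ EllSet p.1 B) ∧ Function.Injective (π ∘ x) := by
  choose! ch hch hdisj using fun q hq hqi => exists_children_of_split π (hsplit q hq hqi)
  have hbranch : ∀ σ n, Refines (branch ch p σ n) p ∧ (branch ch p σ n).2.Infinite := by
    intro σ n
    induction n with
    | zero => exact ⟨Refines.refl p, hp⟩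
    | succ n ih =>
      have h := hch _ ih.1 ih.2 (σ n)
      exact ⟨h.1.trans ih.1, h.2.1⟩
  let x : (ℕ → Bool) → Set ℕ := fun σ => ⋃ n, ((branch ch p σ n).1 : Set ℕ)
  have hx : ∀ σ n, x σ ∈ EllSet (branch ch p σ n).1 (branch ch p σ n).2 := fun σ =>
    iUnion_stem_mem_ellSet _ (fun n => (hch _ (hbranch σ n).1 (hbranch σ n).2 (σ n)).1)
      (fun n => (hch _ (hbranch σ n).1 (hbranch σ n).2 (σ n)).2.2)
  refine ⟨(⋃ σ, x σ) \ p.1, ?_, ?_, x, fun σ => ?_, fun σ τ hστ => funext fun n => ?_⟩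
  · rintro j ⟨hj, hjp⟩
    obtain ⟨σ, hσ⟩ := mem_iUnion.1 hj
    exact ((hx σ 0).2.2 hσ).resolve_left hjp
  · exact ((hx (fun _ => false) 0).1.sdiff p.1.finite_toSet).mono
      (sdiff_subset_sdiff_left (subset_iUnion x _))
  · exact ⟨(hx σ 0).1, (hx σ 0).2.1,
      fun j hj => or_iff_not_imp_left.2 fun hjp => ⟨mem_iUnion.2 ⟨σ, hj⟩, hjp⟩⟩
  induction n using Nat.strong_induction_on with
  | _ n ih =>
    by_contra hne
    have hq : branch ch p τ n = branch ch p σ n := branch_congr fun m hm => (ih m hm).symm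
    have hσ : π (x σ) ∈ π '' EllSet (ch (branch ch p σ n) (σ n)).1 (ch (branch ch p σ n) (σ n)).2 :=
      mem_image_of_mem π (hx σ (n + 1))
    have hτ : π (x τ) ∈ π '' EllSet (ch (branch ch p σ n) (τ n)).1 (ch (branch ch p σ n) (τ n)).2 :=
      hq ▸ mem_image_of_mem π (hx τ (n + 1))
    rw [Bool.eq_not_of_ne (Ne.symm hne)] at hτ
    exact (hdisj _ (hbranch σ n).1 (hbranch σ n).2 (σ n)).ne_of_mem hσ hτ hστ

end Tree

end Ellentuck

open Ellentuck

open Cardinal in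
theorem kuratowski_partition_trace_continuum_ellentuck_general (M : Set (Set ℕ))
    (hdense : EllDense M)
    (𝓕 : Set (Set (Set ℕ)))
    (hcover : ⋃₀ 𝓕 = M)
    (hdisj : ∀ F ∈ 𝓕, ∀ G ∈ 𝓕, F ≠ G → Disjoint F G)
    (hnull : ∀ F ∈ 𝓕, RamseyNull F)
    (hadd : ∀ 𝓕' ⊆ 𝓕, CRSet (⋃₀ 𝓕')) :
    ∀ (a : Finset ℕ) (A : Set ℕ), A.Infinite →
      ∃ (b : Finset ℕ) (B : Set ℕ), B.Infinite ∧ EllSet b B ⊆ EllSet a A ∧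
        #{S : Set (Set ℕ) | (∃ F ∈ 𝓕, S = F ∩ EllSet b B) ∧ S.Nonempty} = continuum := by
  subst hcover
  intro a A hA
  have h𝓕 : 𝓕.PairwiseDisjoint id := hdisj
  obtain ⟨B₀, hB₀A, hB₀, hB₀𝓕⟩ := hdense.exists_ellSet_subset (hadd 𝓕 subset_rfl) hA
  obtain ⟨B, hBB₀, hB, x, hxB, hx⟩ := exists_injective_of_forall_split (piece 𝓕) (a, B₀) hB₀
    fun q hq hqi => exists_refines_disjoint_pieces h𝓕 hnull hadd hqi (hq.ellSet_subset.trans hB₀𝓕)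
  refine ⟨a, B, hB, EllSet.mono (hBB₀.trans hB₀A), ?_⟩
  rw [mk_traces_eq h𝓕 ((EllSet.mono hBB₀).trans hB₀𝓕)]
  refine le_antisymm (mk_image_le.trans ((mk_set_le _).trans mk_set_nat.le)) ?_
  calc 𝔠 = #(range (piece 𝓕 ∘ x)) := by simp [mk_range_eq _ hx]
    _ ≤ #(piece 𝓕 '' EllSet a B) :=
      mk_le_mk_of_subset (range_subset_iff.2 fun σ => mem_image_of_mem _ (hxB σ))

open Cardinal in
/-- If `M` is Ellentuck open dense, not Ramsey null, and `𝓕` is a Kuratowski partition of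
`M` into Ramsey null sets, then every `[a,A]` contains some `[b,B]` on which continuum
many members of `𝓕` leave a nonempty trace. -/
theorem kuratowski_partition_trace_continuum_ellentuck (M : Set (Set ℕ))
    (hopen : EllOpen M) (hdense : EllDense M) (hM : ¬ RamseyNull M)
    (𝓕 : Set (Set (Set ℕ)))
    (hcover : ⋃₀ 𝓕 = M)
    (hdisj : ∀ F ∈ 𝓕, ∀ G ∈ 𝓕, F ≠ G → Disjoint F G)
    (hnull : ∀ F ∈ 𝓕, RamseyNull F)
    (hadd : ∀ 𝓕' ⊆ 𝓕, CRSet (⋃₀ 𝓕')) :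
    ∀ (a : Finset ℕ) (A : Set ℕ), A.Infinite →
      ∃ (b : Finset ℕ) (B : Set ℕ), B.Infinite ∧ EllSet b B ⊆ EllSet a A ∧
        #{S : Set (Set ℕ) | (∃ F ∈ 𝓕, S = F ∩ EllSet b B) ∧ S.Nonempty} = continuum :=
  kuratowski_partition_trace_continuum_ellentuck_general M hdense 𝓕 hcover hdisj hnull hadd
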